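/- arXiv:1807.09934 — 6 statements merged into one kernel-verified Lean document; each statement's English description precedes it below -/
import Mathlib

section
/- Let P₁ and P₂ be probability distributions on a finite set 𝒳. The distribution P̃ minimizing D(P̃‖P₁) + D(P̃‖P₂) over all probability distributions P̃ on 𝒳 is given by P̃(x) = √(P₁(x)P₂(x)) / Σ_{x'} √(P₁(x')P₂(x')), and the minimum value equals 2B(P₁,P₂) where B(P₁,P₂) := −log Σ_x √(P₁(x)P₂(x)) is the Bhattacharyya distance. -/
/-- The distribution minimizing `D(P̃‖P₁) + D(P̃‖P₂)` is the normalized geometric mean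
`P̃(x) = √(P₁(x)P₂(x)) / Σ_{x'} √(P₁(x')P₂(x'))`, and the minimum value equals
`2B(P₁,P₂)` with `B(P₁,P₂) = -log Σ_x √(P₁(x)P₂(x))` the Bhattacharyya distance. -/
theorem stmt_3 {𝒳 : Type*} [Fintype 𝒳] (P₁ P₂ : 𝒳 → ℝ)
    (h₁pos : ∀ x, 0 < P₁ x) (h₂pos : ∀ x, 0 < P₂ x)
    (h₁sum : ∑ x, P₁ x = 1) (h₂sum : ∑ x, P₂ x = 1) :
    let D : (𝒳 → ℝ) → (𝒳 → ℝ) → ℝ := fun p q => ∑ x, p x * Real.log (p x / q x)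
    let Pt : 𝒳 → ℝ := fun x =>
      Real.sqrt (P₁ x * P₂ x) / ∑ x', Real.sqrt (P₁ x' * P₂ x')
    (∀ P' : 𝒳 → ℝ, (∀ x, 0 ≤ P' x) → ∑ x, P' x = 1 →
        D Pt P₁ + D Pt P₂ ≤ D P' P₁ + D P' P₂) ∧
    D Pt P₁ + D Pt P₂ = 2 * (-Real.log (∑ x, Real.sqrt (P₁ x * P₂ x))) := by
  intro D Pt
  have hne : (Finset.univ : Finset 𝒳).Nonempty := by
    rcases (Finset.univ : Finset 𝒳).eq_empty_or_nonempty with h | h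
    · rw [h, Finset.sum_empty] at h₁sum; norm_num at h₁sum
    · exact h
  set Z : ℝ := ∑ x', Real.sqrt (P₁ x' * P₂ x') with hZ
  have hZpos : 0 < Z :=
    Finset.sum_pos (fun x _ => Real.sqrt_pos.2 (mul_pos (h₁pos x) (h₂pos x))) hne
  have hPtpos : ∀ x, 0 < Pt x := fun x =>
    div_pos (Real.sqrt_pos.2 (mul_pos (h₁pos x) (h₂pos x))) hZpos
  have hPtsum : ∑ x, Pt x = 1 := by
    simp only [Pt, ← Finset.sum_div, ← hZ]
    exact div_self hZpos.ne'
  -- key identity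
  have key : ∀ P' : 𝒳 → ℝ, (∀ x, 0 ≤ P' x) → ∑ x, P' x = 1 →
      D P' P₁ + D P' P₂ = 2 * (∑ x, P' x * Real.log (P' x / Pt x)) - 2 * Real.log Z := by
    intro P' hpos hsum
    have : D P' P₁ + D P' P₂
        = ∑ x, (2 * (P' x * Real.log (P' x / Pt x)) - P' x * (2 * Real.log Z)) := by
      simp only [D, ← Finset.sum_add_distrib]
      apply Finset.sum_congr rfl
      intro x _
      rcases (hpos x).lt_or_eq with hx | hx
      · have h1 := (h₁pos x).ne'
        have h2 := (h₂pos x).ne'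
        have hs : Real.sqrt (P₁ x * P₂ x) ≠ 0 :=
          (Real.sqrt_pos.2 (mul_pos (h₁pos x) (h₂pos x))).ne'
        have hPtx : Pt x = Real.sqrt (P₁ x * P₂ x) / Z := rfl
        rw [hPtx, Real.log_div hx.ne' h1, Real.log_div hx.ne' h2,
          Real.log_div hx.ne' (div_pos (Real.sqrt_pos.2 (mul_pos (h₁pos x) (h₂pos x))) hZpos).ne',
          Real.log_div hs hZpos.ne',
          Real.log_sqrt (mul_pos (h₁pos x) (h₂pos x)).le,
          Real.log_mul h1 h2]
        ring
      · rw [← hx]; ring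
    rw [this, Finset.sum_sub_distrib, ← Finset.sum_mul, hsum, Finset.mul_sum]
    ring
  -- Gibbs: relative entropy nonneg
  have gibbs : ∀ P' : 𝒳 → ℝ, (∀ x, 0 ≤ P' x) → ∑ x, P' x = 1 →
      0 ≤ ∑ x, P' x * Real.log (P' x / Pt x) := by
    intro P' hpos hsum
    have h : ∀ x ∈ Finset.univ, P' x - Pt x ≤ P' x * Real.log (P' x / Pt x) := by
      intro x _
      rcases (hpos x).lt_or_eq with hx | hx
      · have hlog := Real.log_le_sub_one_of_pos (div_pos (hPtpos x) hx)
        rw [Real.log_div (hPtpos x).ne' hx.ne'] at hlog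
        have := mul_le_mul_of_nonneg_left hlog hx.le
        have hne := hx.ne'
        rw [Real.log_div hx.ne' (hPtpos x).ne']
        have hfield : P' x * (Pt x / P' x - 1) = Pt x - P' x := by
          field_simp
        nlinarith [mul_le_mul_of_nonneg_left hlog hx.le]
      · rw [← hx]; simp [(hPtpos x).le]
    calc (0:ℝ) = ∑ x, (P' x - Pt x) := by
          rw [Finset.sum_sub_distrib, hsum, hPtsum]; ring
      _ ≤ _ := Finset.sum_le_sum h
  have hmin : D Pt P₁ + D Pt P₂ = -(2 * Real.log Z) := by
    rw [key Pt (fun x => (hPtpos x).le) hPtsum]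
    have : ∑ x, Pt x * Real.log (Pt x / Pt x) = 0 := by
      apply Finset.sum_eq_zero
      intro x _
      rw [div_self (hPtpos x).ne', Real.log_one, mul_zero]
    rw [this]; ring
  constructor
  · intro P' hpos hsum
    rw [hmin, key P' hpos hsum]
    have := gibbs P' hpos hsum
    linarith
  · rw [hmin]; ring
end

section
/- Let P₁, P₂ be probability distributions on a finite set 𝒳, and let X₁ⁿ ~ P₁^⊗n and X₂ⁿ ~ P₂^⊗n be independent. Then P[ log(P₁(X₂ⁿ)/P₂(X₂ⁿ)) + log(P₂(X₁ⁿ)/P₁(X₁ⁿ)) ≥ 0 ] ≤ e^{−2n·B(P₁,P₂)}, where B(P₁,P₂) = −log Σ_x √(P₁(x)P₂(x)). -/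
open scoped Classical

/-!
Chernoff's bound with exponent `1/2`: pointwise `1{L ≥ 0} ≤ e^{L/2}` for the log-likelihood
ratio `L`, so the probability is at most `∑ P₁(x₁ⁿ) P₂(x₂ⁿ) e^{L/2}`. This sum factors as the
square of `∑ₓ √(P₁ⁿ(x) P₂ⁿ(x))`, and the Bhattacharyya coefficient tensorizes, giving
`(∑ₓ √(P₁(x) P₂(x)))^{2n} = e^{-2n B(P₁,P₂)}`.
-/

open Real Finset

lemma ite_log_nonneg_le_sqrt {r : ℝ} (hr : 0 < r) :
    (if 0 ≤ log r then (1 : ℝ) else 0) ≤ √r := by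
  split_ifs with h
  · exact one_le_sqrt.mpr ((log_nonneg_iff hr).mp h)
  · positivity

lemma mul_ite_log_ratio_nonneg_le_sqrt_mul_sqrt {a b c d : ℝ}
    (ha : 0 < a) (hb : 0 < b) (hc : 0 < c) (hd : 0 < d) :
    a * d * (if 0 ≤ log (c / d) + log (b / a) then (1 : ℝ) else 0) ≤ √(a * b) * √(c * d) := by
  rw [← log_mul (by positivity) (by positivity)]
  calc _ ≤ a * d * √(c / d * (b / a)) := by
        gcongr
        exact ite_log_nonneg_le_sqrt (by positivity)
    _ = √(a * b) * √(c * d) := by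
        rw [← sqrt_mul_self (by positivity : 0 ≤ a * d), ← sqrt_mul (by positivity),
          ← sqrt_mul (by positivity)]
        congr 1
        field_simp

lemma sum_sum_mul_ite_log_ratio_nonneg_le_sq {α : Type*} [Fintype α] {p q : α → ℝ}
    (hp : ∀ a, 0 < p a) (hq : ∀ a, 0 < q a) :
    ∑ a, ∑ b, p a * q b * (if 0 ≤ log (p b / q b) + log (q a / p a) then (1 : ℝ) else 0)
      ≤ (∑ a, √(p a * q a)) ^ 2 :=
  calc _ ≤ ∑ a, ∑ b, √(p a * q a) * √(p b * q b) := by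
        refine sum_le_sum fun a _ => sum_le_sum fun b _ => ?_
        exact mul_ite_log_ratio_nonneg_le_sqrt_mul_sqrt (hp a) (hq a) (hp b) (hq b)
    _ = (∑ a, √(p a * q a)) ^ 2 := by rw [sq, sum_mul_sum]

lemma sum_sqrt_prod_mul_prod_eq_pow {𝒳 : Type*} [Fintype 𝒳] {P Q : 𝒳 → ℝ}
    (hP : ∀ x, 0 ≤ P x) (hQ : ∀ x, 0 ≤ Q x) (n : ℕ) :
    ∑ x : Fin n → 𝒳, √((∏ i, P (x i)) * ∏ i, Q (x i)) = (∑ x, √(P x * Q x)) ^ n := by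
  rw [Fintype.sum_pow]
  refine sum_congr rfl fun x _ => ?_
  rw [← prod_mul_distrib, sqrt_prod _ fun i _ => mul_nonneg (hP _) (hQ _)]

lemma pow_le_exp_mul_log {x : ℝ} (hx : 0 ≤ x) (k : ℕ) : x ^ k ≤ exp (k * log x) := by
  rcases hx.eq_or_lt with rfl | hx
  · simpa using pow_le_one₀ le_rfl zero_le_one
  · rw [exp_nat_mul, exp_log hx]

theorem stmt_4_general {𝒳 : Type*} [Fintype 𝒳] (n : ℕ) (P₁ P₂ : 𝒳 → ℝ)
    (h₁pos : ∀ x, 0 < P₁ x) (h₂pos : ∀ x, 0 < P₂ x) :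
    (∑ x1 : Fin n → 𝒳, ∑ x2 : Fin n → 𝒳,
      (∏ i, P₁ (x1 i)) * (∏ i, P₂ (x2 i)) *
        (if 0 ≤ Real.log ((∏ i, P₁ (x2 i)) / ∏ i, P₂ (x2 i)) +
              Real.log ((∏ i, P₂ (x1 i)) / ∏ i, P₁ (x1 i)) then (1:ℝ) else 0))
    ≤ Real.exp (-2 * n * (-Real.log (∑ x, Real.sqrt (P₁ x * P₂ x)))) :=
  calc _ ≤ (∑ x : Fin n → 𝒳, √((∏ i, P₁ (x i)) * ∏ i, P₂ (x i))) ^ 2 :=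
        sum_sum_mul_ite_log_ratio_nonneg_le_sq (fun x => prod_pos fun i _ => h₁pos (x i))
          (fun x => prod_pos fun i _ => h₂pos (x i))
    _ = (∑ x, √(P₁ x * P₂ x)) ^ (2 * n) := by
        rw [sum_sqrt_prod_mul_prod_eq_pow (fun x => (h₁pos x).le) (fun x => (h₂pos x).le),
          ← pow_mul, mul_comm]
    _ ≤ exp ((2 * n : ℕ) * log (∑ x, √(P₁ x * P₂ x))) :=
        pow_le_exp_mul_log (sum_nonneg fun x _ => sqrt_nonneg _) (2 * n)
    _ = exp (-2 * n * (-log (∑ x, √(P₁ x * P₂ x)))) := by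
        push_cast
        ring_nf

/-- For independent `X₁ⁿ ~ P₁^⊗n` and `X₂ⁿ ~ P₂^⊗n`, the probability that the
log-likelihood-ratio test statistic is nonnegative is at most `e^{-2nB(P₁,P₂)}`,
with `B` the Bhattacharyya distance. -/
theorem stmt_4 {𝒳 : Type*} [Fintype 𝒳] (n : ℕ) (P₁ P₂ : 𝒳 → ℝ)
    (h₁pos : ∀ x, 0 < P₁ x) (h₂pos : ∀ x, 0 < P₂ x)
    (h₁sum : ∑ x, P₁ x = 1) (h₂sum : ∑ x, P₂ x = 1) :
    (∑ x1 : Fin n → 𝒳, ∑ x2 : Fin n → 𝒳,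
      (∏ i, P₁ (x1 i)) * (∏ i, P₂ (x2 i)) *
        (if 0 ≤ Real.log ((∏ i, P₁ (x2 i)) / ∏ i, P₂ (x2 i)) +
              Real.log ((∏ i, P₂ (x1 i)) / ∏ i, P₁ (x1 i)) then (1:ℝ) else 0))
    ≤ Real.exp (-2 * n * (-Real.log (∑ x, Real.sqrt (P₁ x * P₂ x)))) :=
  stmt_4_general n P₁ P₂ h₁pos h₂pos
end

section
/- Let X₁ⁿ ~ P₁^⊗n, X₂ⁿ ~ P₂^⊗n, X₃ⁿ ~ P₃^⊗n be independent, with Pᵢ distributions on a finite set. Let ξ_{i,j} denote the event { log(Pᵢ(Xⱼⁿ)/Pⱼ(Xⱼⁿ)) + log(Pⱼ(Xᵢⁿ)/Pᵢ(Xᵢⁿ)) ≥ 0 }. Then P[ξ_{1,2} ∩ ξ_{1,3}] ≤ exp{ −n B(P₁,P₂) − n B(P₂,P₃) − n B(P₁,P₃) }, where B is the Bhattacharyya distance. -/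
open scoped Classical

private lemma sqrt_prod' {ι : Type*} (s : Finset ι) (g : ι → ℝ) (h : ∀ i ∈ s, 0 ≤ g i) :
    Real.sqrt (∏ i ∈ s, g i) = ∏ i ∈ s, Real.sqrt (g i) := by
  induction s using Finset.cons_induction with
  | empty => simp
  | cons a s ha ih =>
    rw [Finset.prod_cons, Finset.prod_cons, Real.sqrt_mul (h a (Finset.mem_cons_self a s)),
      ih (fun i hi => h i (Finset.mem_cons_of_mem hi))]

private lemma sum_sqrt_prod {𝒳 : Type*} [Fintype 𝒳] (n : ℕ) (p q : 𝒳 → ℝ)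
    (hp : ∀ x, 0 < p x) (hq : ∀ x, 0 < q x) :
    ∑ x : Fin n → 𝒳, Real.sqrt ((∏ i, p (x i)) * (∏ i, q (x i)))
      = (∑ x, Real.sqrt (p x * q x)) ^ n := by
  rw [Fintype.sum_pow]
  apply Finset.sum_congr rfl
  intro x _
  rw [← Finset.prod_mul_distrib, sqrt_prod']
  intro i _
  exact le_of_lt (mul_pos (hp _) (hq _))

/-- For independent `Xᵢⁿ ~ Pᵢ^⊗n`, `i = 1,2,3`, the probability of the joint event
`ξ_{1,2} ∩ ξ_{1,3}` (both pairwise log-likelihood-ratio tests fail) is at most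
`exp(-nB(P₁,P₂) - nB(P₂,P₃) - nB(P₁,P₃))`. -/
theorem stmt_5 {𝒳 : Type*} [Fintype 𝒳] (n : ℕ) (P₁ P₂ P₃ : 𝒳 → ℝ)
    (h₁pos : ∀ x, 0 < P₁ x) (h₂pos : ∀ x, 0 < P₂ x) (h₃pos : ∀ x, 0 < P₃ x)
    (h₁sum : ∑ x, P₁ x = 1) (h₂sum : ∑ x, P₂ x = 1) (h₃sum : ∑ x, P₃ x = 1) :
    let B : (𝒳 → ℝ) → (𝒳 → ℝ) → ℝ := fun p q => -Real.log (∑ x, Real.sqrt (p x * q x))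
    (∑ x1 : Fin n → 𝒳, ∑ x2 : Fin n → 𝒳, ∑ x3 : Fin n → 𝒳,
      (∏ i, P₁ (x1 i)) * (∏ i, P₂ (x2 i)) * (∏ i, P₃ (x3 i)) *
        (if (0 ≤ Real.log ((∏ i, P₁ (x2 i)) / ∏ i, P₂ (x2 i)) +
              Real.log ((∏ i, P₂ (x1 i)) / ∏ i, P₁ (x1 i)))
            ∧ (0 ≤ Real.log ((∏ i, P₁ (x3 i)) / ∏ i, P₃ (x3 i)) +
              Real.log ((∏ i, P₃ (x1 i)) / ∏ i, P₁ (x1 i)))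
          then (1:ℝ) else 0))
    ≤ Real.exp (-n * B P₁ P₂ - n * B P₂ P₃ - n * B P₁ P₃) := by
  intro B
  set A1 : (Fin n → 𝒳) → ℝ := fun x => ∏ i, P₁ (x i) with hA1
  set A2 : (Fin n → 𝒳) → ℝ := fun x => ∏ i, P₂ (x i) with hA2
  set A3 : (Fin n → 𝒳) → ℝ := fun x => ∏ i, P₃ (x i) with hA3
  have hA1pos : ∀ x, 0 < A1 x := fun x => Finset.prod_pos fun i _ => h₁pos _
  have hA2pos : ∀ x, 0 < A2 x := fun x => Finset.prod_pos fun i _ => h₂pos _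
  have hA3pos : ∀ x, 0 < A3 x := fun x => Finset.prod_pos fun i _ => h₃pos _
  have key : ∀ x1 x2 x3 : Fin n → 𝒳,
      A1 x1 * A2 x2 * A3 x3 *
        (if (0 ≤ Real.log (A1 x2 / A2 x2) + Real.log (A2 x1 / A1 x1))
            ∧ (0 ≤ Real.log (A1 x3 / A3 x3) + Real.log (A3 x1 / A1 x1))
          then (1:ℝ) else 0)
      ≤ Real.sqrt (A2 x1 * A3 x1) * (Real.sqrt (A1 x2 * A2 x2) * Real.sqrt (A1 x3 * A3 x3)) := by
    intro x1 x2 x3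
    by_cases h : (0 ≤ Real.log (A1 x2 / A2 x2) + Real.log (A2 x1 / A1 x1))
            ∧ (0 ≤ Real.log (A1 x3 / A3 x3) + Real.log (A3 x1 / A1 x1))
    · rw [if_pos h, mul_one]
      obtain ⟨h12, h13⟩ := h
      rw [← Real.log_mul (div_pos (hA1pos x2) (hA2pos x2)).ne'
          (div_pos (hA2pos x1) (hA1pos x1)).ne', div_mul_div_comm] at h12
      rw [← Real.log_mul (div_pos (hA1pos x3) (hA3pos x3)).ne'
          (div_pos (hA3pos x1) (hA1pos x1)).ne', div_mul_div_comm] at h13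
      have e12 : A1 x1 * A2 x2 ≤ A1 x2 * A2 x1 := by
        have := (Real.le_log_iff_exp_le
          (div_pos (mul_pos (hA1pos x2) (hA2pos x1)) (mul_pos (hA2pos x2) (hA1pos x1)))).mp h12
        rw [Real.exp_zero, le_div_iff₀ (mul_pos (hA2pos x2) (hA1pos x1)), one_mul] at this
        linarith [this]
      have e13 : A1 x1 * A3 x3 ≤ A1 x3 * A3 x1 := by
        have := (Real.le_log_iff_exp_le
          (div_pos (mul_pos (hA1pos x3) (hA3pos x1)) (mul_pos (hA3pos x3) (hA1pos x1)))).mp h13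
        rw [Real.exp_zero, le_div_iff₀ (mul_pos (hA3pos x3) (hA1pos x1)), one_mul] at this
        linarith [this]
      rw [← Real.sqrt_mul (mul_pos (hA1pos x2) (hA2pos x2)).le,
        ← Real.sqrt_mul (mul_pos (hA2pos x1) (hA3pos x1)).le]
      rw [show A1 x1 * A2 x2 * A3 x3 = Real.sqrt ((A1 x1 * A2 x2 * A3 x3)^2) by
        rw [Real.sqrt_sq (mul_pos (mul_pos (hA1pos x1) (hA2pos x2)) (hA3pos x3)).le]]
      apply Real.sqrt_le_sqrt
      have expand : (A1 x1 * A2 x2 * A3 x3)^2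
          = (A1 x1 * A2 x2) * (A1 x1 * A3 x3) * (A2 x2 * A3 x3) := by ring
      rw [expand]
      calc (A1 x1 * A2 x2) * (A1 x1 * A3 x3) * (A2 x2 * A3 x3)
          ≤ (A1 x2 * A2 x1) * (A1 x3 * A3 x1) * (A2 x2 * A3 x3) := by
            apply mul_le_mul_of_nonneg_right _ (mul_pos (hA2pos x2) (hA3pos x3)).le
            exact mul_le_mul e12 e13 (mul_pos (hA1pos x1) (hA3pos x3)).le
              (mul_pos (hA1pos x2) (hA2pos x1)).le
        _ = A2 x1 * A3 x1 * (A1 x2 * A2 x2 * (A1 x3 * A3 x3)) := by ring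
    · rw [if_neg h, mul_zero]
      have h1 := Real.sqrt_nonneg (A2 x1 * A3 x1)
      have h2 := Real.sqrt_nonneg (A1 x2 * A2 x2)
      have h3 := Real.sqrt_nonneg (A1 x3 * A3 x3)
      positivity
  have factor : (∑ x1 : Fin n → 𝒳, ∑ x2 : Fin n → 𝒳, ∑ x3 : Fin n → 𝒳,
        Real.sqrt (A2 x1 * A3 x1) * (Real.sqrt (A1 x2 * A2 x2) * Real.sqrt (A1 x3 * A3 x3)))
      = (∑ x1 : Fin n → 𝒳, Real.sqrt (A2 x1 * A3 x1)) *
        ((∑ x2 : Fin n → 𝒳, Real.sqrt (A1 x2 * A2 x2)) *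
         (∑ x3 : Fin n → 𝒳, Real.sqrt (A1 x3 * A3 x3))) := by
    simp only [← Finset.mul_sum, ← Finset.sum_mul]
  have hsum : (∑ x1 : Fin n → 𝒳, ∑ x2 : Fin n → 𝒳, ∑ x3 : Fin n → 𝒳,
      A1 x1 * A2 x2 * A3 x3 *
        (if (0 ≤ Real.log (A1 x2 / A2 x2) + Real.log (A2 x1 / A1 x1))
            ∧ (0 ≤ Real.log (A1 x3 / A3 x3) + Real.log (A3 x1 / A1 x1))
          then (1:ℝ) else 0))
      ≤ (∑ x1 : Fin n → 𝒳, Real.sqrt (A2 x1 * A3 x1)) *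
        ((∑ x2 : Fin n → 𝒳, Real.sqrt (A1 x2 * A2 x2)) *
         (∑ x3 : Fin n → 𝒳, Real.sqrt (A1 x3 * A3 x3))) := by
    rw [← factor]
    apply Finset.sum_le_sum; intro x1 _
    apply Finset.sum_le_sum; intro x2 _
    apply Finset.sum_le_sum; intro x3 _
    exact key x1 x2 x3
  refine le_trans hsum ?_
  have hne : Nonempty 𝒳 := by
    by_contra h
    rw [not_nonempty_iff] at h
    simp at h₁sum
  have hpos : ∀ (p q : 𝒳 → ℝ), (∀ x, 0 < p x) → (∀ x, 0 < q x) →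
      (0:ℝ) < ∑ x, Real.sqrt (p x * q x) := fun p q hp hq =>
    Finset.sum_pos (fun x _ => Real.sqrt_pos.mpr (mul_pos (hp x) (hq x))) Finset.univ_nonempty
  rw [sum_sqrt_prod n P₂ P₃ h₂pos h₃pos, sum_sqrt_prod n P₁ P₂ h₁pos h₂pos,
    sum_sqrt_prod n P₁ P₃ h₁pos h₃pos]
  have hB : ∀ (p q : 𝒳 → ℝ), (0:ℝ) < ∑ x, Real.sqrt (p x * q x) →
      Real.exp (-n * B p q) = (∑ x, Real.sqrt (p x * q x)) ^ n := by
    intro p q hpq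
    show Real.exp (-n * -Real.log (∑ x, Real.sqrt (p x * q x))) = _
    rw [neg_mul_neg, Real.exp_nat_mul, Real.exp_log hpq]
  rw [show -(n:ℝ) * B P₁ P₂ - n * B P₂ P₃ - n * B P₁ P₃
      = (-n * B P₂ P₃) + ((-n * B P₁ P₂) + (-n * B P₁ P₃)) by ring,
    Real.exp_add, Real.exp_add, hB P₂ P₃ (hpos _ _ h₂pos h₃pos),
    hB P₁ P₂ (hpos _ _ h₁pos h₂pos), hB P₁ P₃ (hpos _ _ h₁pos h₃pos)]
end

section
/- Let events E₁, ..., E_N (in a probability space) satisfy P[∪ᵢ Eᵢ] > 0. Then P[∪_{i=1}^N Eᵢ] ≥ (Σᵢ P[Eᵢ])² / (Σ_{i,j} P[Eᵢ ∩ Eⱼ]), where the double sum is over all ordered pairs (i,j) including i = j. -/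
/-!
With `f = ∑ i, 𝟙_{E i}` we have `∫ f = ∑ i, P[E i]` and `∫ f² = ∑ i j, P[E i ∩ E j]`; since `f`
vanishes off `U = ⋃ i, E i`, Cauchy–Schwarz applied to `f · 𝟙_U` gives `(∫ f)² ≤ P[U] · ∫ f²`.
-/

open scoped ENNReal

namespace MeasureTheory

theorem sq_sum_indicator_one {Ω ι : Type*} (s : Finset ι) (E : ι → Set Ω) (ω : Ω) :
    (∑ i ∈ s, (E i).indicator (1 : Ω → ℝ≥0∞) ω) ^ 2
      = ∑ i ∈ s, ∑ j ∈ s, (E i ∩ E j).indicator 1 ω := by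
  simp only [sq, Finset.sum_mul_sum, Set.inter_indicator_one, Pi.mul_apply]

variable {Ω : Type*} [MeasurableSpace Ω] {μ : Measure Ω}

theorem sq_lintegral_mul_le {f g : Ω → ℝ≥0∞} (hf : AEMeasurable f μ) (hg : AEMeasurable g μ) :
    (∫⁻ ω, f ω * g ω ∂μ) ^ 2 ≤ (∫⁻ ω, f ω ^ 2 ∂μ) * ∫⁻ ω, g ω ^ 2 ∂μ := by
  have holder := ENNReal.lintegral_mul_le_Lp_mul_Lq μ Real.HolderConjugate.two_two hf hg
  simp only [Pi.mul_apply, ENNReal.rpow_ofNat] at holder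
  calc (∫⁻ ω, f ω * g ω ∂μ) ^ 2
      ≤ ((∫⁻ ω, f ω ^ 2 ∂μ) ^ (1 / 2 : ℝ) * (∫⁻ ω, g ω ^ 2 ∂μ) ^ (1 / 2 : ℝ)) ^ 2 := by
        gcongr
    _ = (∫⁻ ω, f ω ^ 2 ∂μ) * ∫⁻ ω, g ω ^ 2 ∂μ := by
        rw [mul_pow, ← ENNReal.rpow_mul_natCast, ← ENNReal.rpow_mul_natCast]
        norm_num

theorem sq_lintegral_le_measure_mul_lintegral_sq {f : Ω → ℝ≥0∞} {U : Set Ω}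
    (hf : AEMeasurable f μ) (hU : MeasurableSet U) (hfU : ∀ ω ∉ U, f ω = 0) :
    (∫⁻ ω, f ω ∂μ) ^ 2 ≤ μ U * ∫⁻ ω, f ω ^ 2 ∂μ := by
  have hf_eq : ∀ ω, f ω = f ω * U.indicator 1 ω := by
    intro ω
    by_cases hω : ω ∈ U <;> simp [hω, hfU]
  calc (∫⁻ ω, f ω ∂μ) ^ 2 = (∫⁻ ω, f ω * U.indicator 1 ω ∂μ) ^ 2 := by simp_rw [← hf_eq]
    _ ≤ (∫⁻ ω, f ω ^ 2 ∂μ) * ∫⁻ ω, U.indicator 1 ω ^ 2 ∂μ :=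
        sq_lintegral_mul_le hf (aemeasurable_one.indicator hU)
    _ = μ U * ∫⁻ ω, f ω ^ 2 ∂μ := by
        have h_sq : ∀ ω, U.indicator (1 : Ω → ℝ≥0∞) ω ^ 2 = U.indicator 1 ω := fun ω ↦ by
          by_cases hω : ω ∈ U <;> simp [hω]
        simp only [h_sq, lintegral_indicator_one hU]
        ring

theorem lintegral_sum_indicator_one {ι : Type*} (s : Finset ι) {E : ι → Set Ω}
    (hE : ∀ i, MeasurableSet (E i)) :
    ∫⁻ ω, ∑ i ∈ s, (E i).indicator 1 ω ∂μ = ∑ i ∈ s, μ (E i) := by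
  rw [lintegral_finsetSum _ fun i _ ↦ measurable_one.indicator (hE i)]
  simp only [lintegral_indicator_one (hE _)]

theorem sq_sum_measure_le_measure_iUnion_mul {ι : Type*} [Fintype ι] {E : ι → Set Ω}
    (hE : ∀ i, MeasurableSet (E i)) :
    (∑ i, μ (E i)) ^ 2 ≤ μ (⋃ i, E i) * ∑ i, ∑ j, μ (E i ∩ E j) := by
  set f : Ω → ℝ≥0∞ := fun ω ↦ ∑ i, (E i).indicator 1 ω
  have hf : Measurable f := Finset.measurable_sum _ fun i _ ↦ measurable_one.indicator (hE i)
  have hf_union : ∀ ω ∉ ⋃ i, E i, f ω = 0 := fun ω hω ↦ by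
    simp only [Set.mem_iUnion, not_exists] at hω
    simp [f, hω]
  calc (∑ i, μ (E i)) ^ 2 = (∫⁻ ω, f ω ∂μ) ^ 2 := by rw [lintegral_sum_indicator_one _ hE]
    _ ≤ μ (⋃ i, E i) * ∫⁻ ω, f ω ^ 2 ∂μ :=
        sq_lintegral_le_measure_mul_lintegral_sq hf.aemeasurable (MeasurableSet.iUnion hE) hf_union
    _ = μ (⋃ i, E i) * ∑ i, ∑ j, μ (E i ∩ E j) := by
        simp only [f, sq_sum_indicator_one]
        rw [lintegral_finsetSum _ fun i _ ↦ Finset.measurable_sum _ fun j _ ↦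
          measurable_one.indicator ((hE i).inter (hE j))]
        simp only [lintegral_sum_indicator_one _ fun j ↦ (hE _).inter (hE j)]

theorem sq_sum_measureReal_le_measureReal_iUnion_mul [IsFiniteMeasure μ] {ι : Type*} [Fintype ι]
    {E : ι → Set Ω} (hE : ∀ i, MeasurableSet (E i)) :
    (∑ i, (μ (E i)).toReal) ^ 2 ≤ (μ (⋃ i, E i)).toReal * ∑ i, ∑ j, (μ (E i ∩ E j)).toReal := by
  have h := ENNReal.toReal_mono (by simp [ENNReal.mul_eq_top])
    (sq_sum_measure_le_measure_iUnion_mul (μ := μ) hE)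
  rw [ENNReal.toReal_pow, ENNReal.toReal_mul, ENNReal.toReal_sum (by simp),
    ENNReal.toReal_sum (by simp)] at h
  simpa only [ENNReal.toReal_sum fun _ _ ↦ measure_ne_top μ _] using h

end MeasureTheory

open MeasureTheory

theorem stmt_6_general {Ω : Type*} [MeasurableSpace Ω] (μ : Measure Ω) [IsProbabilityMeasure μ]
    (N : ℕ) (E : Fin N → Set Ω) (hE : ∀ i, MeasurableSet (E i)) :
    (∑ i, (μ (E i)).toReal) ^ 2 / (∑ i, ∑ j, (μ (E i ∩ E j)).toReal)
      ≤ (μ (⋃ i, E i)).toReal :=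
  div_le_of_le_mul₀ (by positivity) ENNReal.toReal_nonneg
    (sq_sum_measureReal_le_measureReal_iUnion_mul hE)

/-- Chung–Erdős inequality: for events `E₁,...,E_N` with `P[⋃ᵢ Eᵢ] > 0`,
`P[⋃ᵢ Eᵢ] ≥ (Σᵢ P[Eᵢ])² / Σ_{i,j} P[Eᵢ ∩ Eⱼ]` (double sum over all ordered pairs). -/
theorem stmt_6 {Ω : Type*} [MeasurableSpace Ω] (μ : Measure Ω) [IsProbabilityMeasure μ]
    (N : ℕ) (E : Fin N → Set Ω) (hE : ∀ i, MeasurableSet (E i))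
    (hpos : 0 < (μ (⋃ i, E i)).toReal) :
    (∑ i, (μ (E i)).toReal) ^ 2 / (∑ i, ∑ j, (μ (E i ∩ E j)).toReal)
      ≤ (μ (⋃ i, E i)).toReal :=
  stmt_6_general μ N E hE
end

section
/- (Fano-type bound for mixtures) Let F be a finite index set of size N ≥ 2, and for each θ ∈ F let P_θ be a probability distribution on a finite set. Set P̄ = (1/N) Σ_θ P_θ and let r̄ = inf_T (1/N) Σ_θ P_θ[T ≠ θ], where the infimum is over all estimators T (measurable functions from the sample space to F). Then (1/N) Σ_{θ∈F} D(P_θ‖P̄) ≥ (1−r̄) log(N(1−r̄)) + r̄ log(N r̄/(N−1)). -/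
open Finset

/-- Pointwise estimate for the log-sum inequality. -/
lemma logsum_pointwise {p q S T : ℝ} (hp : 0 ≤ p) (hq : 0 ≤ q) (hS : 0 < S) (hT : 0 < T)
    (h0 : q = 0 → p = 0) :
    p * Real.log (S / T) + p - q * (S / T) ≤ p * Real.log (p / q) := by
  rcases hp.eq_or_lt with h | hp'
  · rw [← h]
    have : 0 ≤ q * (S / T) := by positivity
    simp only [zero_mul, add_zero, zero_add, zero_sub]
    linarith
  · have hq' : 0 < q := hq.lt_of_ne (fun h => hp'.ne' (h0 h.symm))
    have h1 : Real.log (q * S / (p * T)) ≤ q * S / (p * T) - 1 :=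
      Real.log_le_sub_one_of_pos (by positivity)
    have h2 : Real.log (p / q) = Real.log p - Real.log q :=
      Real.log_div hp'.ne' hq'.ne'
    have h3 : Real.log (S / T) = Real.log S - Real.log T :=
      Real.log_div hS.ne' hT.ne'
    have h4 : Real.log (q * S / (p * T)) =
        Real.log q + Real.log S - (Real.log p + Real.log T) := by
      rw [Real.log_div (by positivity) (by positivity), Real.log_mul hq'.ne' hS.ne',
        Real.log_mul hp'.ne' hT.ne']
    have h5 : p * (q * S / (p * T)) = q * (S / T) := by
      field_simp
    nlinarith [mul_le_mul_of_nonneg_left h1 hp'.le]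

/-- The log-sum inequality. -/
lemma logsum {ι : Type*} (s : Finset ι) (p q : ι → ℝ)
    (hp : ∀ i ∈ s, 0 ≤ p i) (hq : ∀ i ∈ s, 0 ≤ q i)
    (h0 : ∀ i ∈ s, q i = 0 → p i = 0) :
    (∑ i ∈ s, p i) * Real.log ((∑ i ∈ s, p i) / (∑ i ∈ s, q i)) ≤
      ∑ i ∈ s, p i * Real.log (p i / q i) := by
  have hS0 : 0 ≤ ∑ i ∈ s, p i := Finset.sum_nonneg hp
  have hT0 : 0 ≤ ∑ i ∈ s, q i := Finset.sum_nonneg hq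
  rcases hS0.eq_or_lt with h | hS
  · have hall : ∀ i ∈ s, p i = 0 := (Finset.sum_eq_zero_iff_of_nonneg hp).mp h.symm
    have h1 : ∑ i ∈ s, p i * Real.log (p i / q i) = 0 :=
      Finset.sum_eq_zero (fun i hi => by rw [hall i hi]; ring)
    rw [h1, ← h]
    simp
  · have hT : 0 < ∑ i ∈ s, q i := by
      rcases hT0.eq_or_lt with h' | h'
      · exfalso
        have : ∀ i ∈ s, q i = 0 := (Finset.sum_eq_zero_iff_of_nonneg hq).mp h'.symm
        have : ∑ i ∈ s, p i = 0 :=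
          Finset.sum_eq_zero (fun i hi => h0 i hi (this i hi))
        linarith
      · exact h'
    set S := ∑ i ∈ s, p i
    set T := ∑ i ∈ s, q i
    have key : ∑ i ∈ s, (p i * Real.log (S / T) + p i - q i * (S / T)) ≤
        ∑ i ∈ s, p i * Real.log (p i / q i) :=
      Finset.sum_le_sum (fun i hi =>
        logsum_pointwise (hp i hi) (hq i hi) hS hT (h0 i hi))
    have expand : ∑ i ∈ s, (p i * Real.log (S / T) + p i - q i * (S / T)) =
        S * Real.log (S / T) + S - T * (S / T) := by
      rw [Finset.sum_sub_distrib, Finset.sum_add_distrib, ← Finset.sum_mul, ← Finset.sum_mul]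
    have hTS : T * (S / T) = S := by field_simp
    rw [expand, hTS] at key
    linarith

/-- Fano-type bound for mixtures: with `P̄` the uniform mixture of the `P_θ`, `θ ∈ F`,
`|F| = N ≥ 2`, and `r̄` the minimal average error probability over all estimators
`T : Ω → F`, one has
`(1/N) Σ_θ D(P_θ‖P̄) ≥ (1-r̄) log(N(1-r̄)) + r̄ log(N r̄/(N-1))`. -/
theorem stmt_8 {Ω F : Type*} [Fintype Ω] [Fintype F] [DecidableEq F]
    (hN : 2 ≤ Fintype.card F)
    (P : F → Ω → ℝ) (hP : ∀ θ ω, 0 ≤ P θ ω) (hPs : ∀ θ, ∑ ω, P θ ω = 1) :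
    let N : ℝ := Fintype.card F
    let Pbar : Ω → ℝ := fun ω => (1 / N) * ∑ θ, P θ ω
    let D : (Ω → ℝ) → (Ω → ℝ) → ℝ := fun p q => ∑ ω, p ω * Real.log (p ω / q ω)
    let rbar : ℝ := ⨅ T : Ω → F,
      (1 / N) * ∑ θ, ∑ ω ∈ Finset.univ.filter (fun ω => T ω ≠ θ), P θ ω
    (1 - rbar) * Real.log (N * (1 - rbar)) + rbar * Real.log (N * rbar / (N - 1)) ≤
      (1 / N) * ∑ θ, D (P θ) Pbar := by
  intro N Pbar D rbar
  classical
  have hF : Nonempty F := Fintype.card_pos_iff.mp (by omega)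
  obtain ⟨θ₀⟩ := hF
  have hN2 : (2:ℝ) ≤ N := by
    show (2:ℝ) ≤ (Fintype.card F : ℝ)
    exact_mod_cast hN
  have hNpos : (0:ℝ) < N := by linarith
  have hN1 : (0:ℝ) < N - 1 := by linarith
  have hΩ : Nonempty Ω := by
    by_contra h
    rw [not_nonempty_iff] at h
    have := hPs θ₀
    rw [Finset.univ_eq_empty, Finset.sum_empty] at this
    norm_num at this
  -- the error functional and its minimizer
  set f : (Ω → F) → ℝ := fun T =>
    (1 / N) * ∑ θ, ∑ ω ∈ Finset.univ.filter (fun ω => T ω ≠ θ), P θ ω with hf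
  haveI : Nonempty (Ω → F) := ⟨fun _ => θ₀⟩
  obtain ⟨T, hT⟩ := Finite.exists_min f
  have hrbar : rbar = f T := by
    refine le_antisymm ?_ (le_ciInf hT)
    exact ciInf_le (Set.finite_range f).bddBelow T
  set r := f T with hr
  -- basic positivity facts
  have hPbarnn : ∀ ω, 0 ≤ Pbar ω := fun ω => by
    have : 0 ≤ ∑ θ, P θ ω := Finset.sum_nonneg (fun θ _ => hP θ ω)
    have h1N : 0 ≤ (1:ℝ)/N := by positivity
    exact mul_nonneg h1N this
  have hPbar0 : ∀ ω, Pbar ω = 0 → ∀ θ, P θ ω = 0 := by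
    intro ω hω θ
    have hsum : ∑ θ', P θ' ω = 0 := by
      have : (1/N) * ∑ θ', P θ' ω = 0 := hω
      have h1N : (1:ℝ)/N ≠ 0 := by positivity
      exact (mul_eq_zero.mp this).resolve_left h1N
    exact (Finset.sum_eq_zero_iff_of_nonneg (fun θ' _ => hP θ' ω)).mp hsum θ (Finset.mem_univ θ)
  -- abbreviations
  set a : F → ℝ := fun θ => ∑ ω ∈ Finset.univ.filter (fun ω => T ω = θ), P θ ω with ha
  set b : F → ℝ := fun θ => ∑ ω ∈ Finset.univ.filter (fun ω => T ω = θ), Pbar ω with hb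
  set a' : F → ℝ := fun θ => ∑ ω ∈ Finset.univ.filter (fun ω => ¬ T ω = θ), P θ ω with ha'
  set b' : F → ℝ := fun θ => ∑ ω ∈ Finset.univ.filter (fun ω => ¬ T ω = θ), Pbar ω with hb'
  have hann : ∀ θ, 0 ≤ a θ := fun θ => Finset.sum_nonneg (fun ω _ => hP θ ω)
  have ha'nn : ∀ θ, 0 ≤ a' θ := fun θ => Finset.sum_nonneg (fun ω _ => hP θ ω)
  have hbnn : ∀ θ, 0 ≤ b θ := fun θ => Finset.sum_nonneg (fun ω _ => hPbarnn ω)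
  have hb'nn : ∀ θ, 0 ≤ b' θ := fun θ => Finset.sum_nonneg (fun ω _ => hPbarnn ω)
  have hb0 : ∀ θ, b θ = 0 → a θ = 0 := by
    intro θ hθ
    have hz : ∀ ω ∈ Finset.univ.filter (fun ω => T ω = θ), Pbar ω = 0 :=
      (Finset.sum_eq_zero_iff_of_nonneg (fun ω _ => hPbarnn ω)).mp hθ
    exact Finset.sum_eq_zero (fun ω hω => hPbar0 ω (hz ω hω) θ)
  have hb'0 : ∀ θ, b' θ = 0 → a' θ = 0 := by
    intro θ hθ
    have hz : ∀ ω ∈ Finset.univ.filter (fun ω => ¬ T ω = θ), Pbar ω = 0 :=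
      (Finset.sum_eq_zero_iff_of_nonneg (fun ω _ => hPbarnn ω)).mp hθ
    exact Finset.sum_eq_zero (fun ω hω => hPbar0 ω (hz ω hω) θ)
  -- sums
  have hsumPbar : ∑ ω, Pbar ω = 1 := by
    have : ∑ ω, Pbar ω = (1/N) * ∑ ω, ∑ θ, P θ ω := by
      rw [Finset.mul_sum]
    rw [this, Finset.sum_comm]
    have : ∑ θ, ∑ ω, P θ ω = (N:ℝ) := by
      rw [Finset.sum_congr rfl (fun θ _ => hPs θ)]
      simp [N]
    rw [this]
    field_simp
  have haa' : ∀ θ, a θ + a' θ = 1 := by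
    intro θ
    rw [ha, ha']
    rw [Finset.sum_filter_add_sum_filter_not]
    exact hPs θ
  have hbb' : ∀ θ, b θ + b' θ = 1 := by
    intro θ
    rw [hb, hb']
    rw [Finset.sum_filter_add_sum_filter_not]
    exact hsumPbar
  have hSb : ∑ θ, b θ = 1 := by
    rw [hb]
    have := Finset.sum_fiberwise_eq_sum_filter Finset.univ Finset.univ T Pbar
    simpa using this.trans (by simp [hsumPbar])
  have hSb' : ∑ θ, b' θ = N - 1 := by
    have h1 : ∑ θ, (b θ + b' θ) = (N:ℝ) := by
      rw [Finset.sum_congr rfl (fun θ _ => hbb' θ)]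
      simp [N]
    rw [Finset.sum_add_distrib, hSb] at h1
    linarith
  have hSa' : ∑ θ, a' θ = N * r := by
    have : r = (1/N) * ∑ θ, a' θ := hr
    rw [this]
    field_simp
  have hSa : ∑ θ, a θ = N * (1 - r) := by
    have h1 : ∑ θ, (a θ + a' θ) = (N:ℝ) := by
      rw [Finset.sum_congr rfl (fun θ _ => haa' θ)]
      simp [N]
    rw [Finset.sum_add_distrib, hSa'] at h1
    linarith
  -- step A: data processing per θ
  have stepA : ∀ θ, a θ * Real.log (a θ / b θ) + a' θ * Real.log (a' θ / b' θ) ≤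
      D (P θ) Pbar := by
    intro θ
    have h1 := logsum (Finset.univ.filter (fun ω => T ω = θ)) (P θ) Pbar
      (fun ω _ => hP θ ω) (fun ω _ => hPbarnn ω) (fun ω _ hω => hPbar0 ω hω θ)
    have h2 := logsum (Finset.univ.filter (fun ω => ¬ T ω = θ)) (P θ) Pbar
      (fun ω _ => hP θ ω) (fun ω _ => hPbarnn ω) (fun ω _ hω => hPbar0 ω hω θ)
    have hsplit : D (P θ) Pbar =
        (∑ ω ∈ Finset.univ.filter (fun ω => T ω = θ), P θ ω * Real.log (P θ ω / Pbar ω)) +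
        ∑ ω ∈ Finset.univ.filter (fun ω => ¬ T ω = θ), P θ ω * Real.log (P θ ω / Pbar ω) :=
      (Finset.sum_filter_add_sum_filter_not Finset.univ _ _).symm
    rw [hsplit]
    exact add_le_add h1 h2
  -- step B: convexity over θ
  have h3 := logsum Finset.univ a b (fun θ _ => hann θ) (fun θ _ => hbnn θ)
    (fun θ _ => hb0 θ)
  have h4 := logsum Finset.univ a' b' (fun θ _ => ha'nn θ) (fun θ _ => hb'nn θ)
    (fun θ _ => hb'0 θ)
  rw [hSa, hSb, div_one] at h3
  rw [hSa', hSb'] at h4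
  have hsum1 : ∑ θ, (a θ * Real.log (a θ / b θ) + a' θ * Real.log (a' θ / b' θ)) ≤
      ∑ θ, D (P θ) Pbar := Finset.sum_le_sum (fun θ _ => stepA θ)
  rw [Finset.sum_add_distrib] at hsum1
  -- combine
  have hcomb : (N * (1 - r)) * Real.log (N * (1 - r)) +
      (N * r) * Real.log (N * r / (N - 1)) ≤ ∑ θ, D (P θ) Pbar := by linarith
  have hfinal : (1 - r) * Real.log (N * (1 - r)) + r * Real.log (N * r / (N - 1)) ≤
      (1 / N) * ∑ θ, D (P θ) Pbar := by
    have hmul := mul_le_mul_of_nonneg_left hcomb (by positivity : (0:ℝ) ≤ 1/N)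
    have heq : (1/N) * ((N * (1 - r)) * Real.log (N * (1 - r)) +
        (N * r) * Real.log (N * r / (N - 1))) =
        (1 - r) * Real.log (N * (1 - r)) + r * Real.log (N * r / (N - 1)) := by
      field_simp
    linarith [heq ▸ hmul]
  rw [hrbar]
  exact hfinal
end

section
/- Let Q⋆ be a probability distribution on finite 𝒴, P a distribution on finite 𝒳, and Q a channel from 𝒳 to 𝒴, all with positive entries. Define μ₀(t) = −log Σ_{x,y} P(x) Q⋆(y)^{1−t} Q(y|x)^{t}. Then μ₀ is concave on [0,1], μ₀(1) = 0, and (dμ₀/dt)(1) = −I(P,Q) − D([PQ]‖Q⋆), where [PQ](y) = Σ_x P(x)Q(y|x) and I(P,Q) = Σ_{x,y} P(x)Q(y|x) log(Q(y|x)/[PQ](y)). Consequently, sup_{t∈[0,1]} μ₀(t) ≤ I(P,Q) + D([PQ]‖Q⋆). -/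
/-!
Writing `Q⋆(y)^{1-t} Q(y|x)^t = Q⋆(y) exp (t log (Q(y|x)/Q⋆(y)))` exhibits `μ₀` as minus a
log-sum-exp in `t`, which is concave by Hölder's inequality. At `t = 1` the sum is
`Σ P Q = 1`, so `μ₀'(1)` is minus the mean log-likelihood ratio `Σ P Q log (Q/Q⋆)`, and this splits
as `I(P,Q) + D([PQ]‖Q⋆)`. Since `μ₀` also vanishes at `t = 0`, concavity puts `μ₀` below its tangent
at `1`, `μ₀(t) ≤ (1 - t)(I + D)`, and evaluating at `t = 0` gives `I + D ≥ 0`.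
-/

open Real Finset

theorem sum_rpow_mul_rpow_le {ι : Type*} (s : Finset ι) {A B : ι → ℝ}
    (hA : ∀ i ∈ s, 0 < A i) (hB : ∀ i ∈ s, 0 < B i) (hs : s.Nonempty)
    {a b : ℝ} (ha : 0 ≤ a) (hb : 0 ≤ b) (hab : a + b = 1) :
    ∑ i ∈ s, A i ^ a * B i ^ b ≤ (∑ i ∈ s, A i) ^ a * (∑ i ∈ s, B i) ^ b := by
  set SA := ∑ i ∈ s, A i
  set SB := ∑ i ∈ s, B i
  have hSA : 0 < SA := sum_pos hA hs
  have hSB : 0 < SB := sum_pos hB hs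
  have hnormalised : ∑ i ∈ s, (A i / SA) ^ a * (B i / SB) ^ b ≤ 1 :=
    calc ∑ i ∈ s, (A i / SA) ^ a * (B i / SB) ^ b
        ≤ ∑ i ∈ s, (a * (A i / SA) + b * (B i / SB)) := sum_le_sum fun i hi =>
          geom_mean_le_arith_mean2_weighted ha hb
            (div_nonneg (hA i hi).le hSA.le) (div_nonneg (hB i hi).le hSB.le) hab
      _ = 1 := by
          rw [sum_add_distrib, ← mul_sum, ← mul_sum, ← sum_div, ← sum_div,
            div_self hSA.ne', div_self hSB.ne', mul_one, mul_one, hab]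
  have hterm : ∀ i ∈ s,
      (A i / SA) ^ a * (B i / SB) ^ b = A i ^ a * B i ^ b / (SA ^ a * SB ^ b) := fun i hi => by
    rw [div_rpow (hA i hi).le hSA.le, div_rpow (hB i hi).le hSB.le, div_mul_div_comm]
  rwa [sum_congr rfl hterm, ← sum_div, div_le_one (by positivity)] at hnormalised

theorem convexOn_log_sum_mul_exp {ι : Type*} [Fintype ι] [Nonempty ι] (c r : ι → ℝ)
    (hc : ∀ i, 0 < c i) :
    ConvexOn ℝ Set.univ (fun t => log (∑ i, c i * exp (t * r i))) := by
  have hpos : ∀ t, 0 < ∑ i, c i * exp (t * r i) := fun t =>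
    sum_pos (fun i _ => mul_pos (hc i) (exp_pos _)) univ_nonempty
  refine ⟨convex_univ, fun s _ u _ a b ha hb hab => ?_⟩
  have hsplit : ∀ i, c i * exp ((a * s + b * u) * r i) =
      (c i * exp (s * r i)) ^ a * (c i * exp (u * r i)) ^ b := fun i => by
    rw [mul_rpow (hc i).le (exp_pos _).le, mul_rpow (hc i).le (exp_pos _).le, ← exp_mul,
      ← exp_mul, mul_mul_mul_comm, ← rpow_add (hc i), hab, rpow_one, ← exp_add]
    ring_nf
  have hholder : ∑ i, c i * exp ((a * s + b * u) * r i) ≤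
      (∑ i, c i * exp (s * r i)) ^ a * (∑ i, c i * exp (u * r i)) ^ b := by
    simp only [hsplit]
    exact sum_rpow_mul_rpow_le _ (fun i _ => mul_pos (hc i) (exp_pos _))
      (fun i _ => mul_pos (hc i) (exp_pos _)) univ_nonempty ha hb hab
  calc log (∑ i, c i * exp ((a • s + b • u) * r i))
      ≤ log ((∑ i, c i * exp (s * r i)) ^ a * (∑ i, c i * exp (u * r i)) ^ b) :=
        log_le_log (hpos _) hholder
    _ = a • log (∑ i, c i * exp (s * r i)) + b • log (∑ i, c i * exp (u * r i)) := by
        rw [log_mul (rpow_pos_of_pos (hpos s) a).ne' (rpow_pos_of_pos (hpos u) b).ne',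
          log_rpow (hpos s), log_rpow (hpos u), smul_eq_mul, smul_eq_mul]

theorem hasDerivAt_log_sum_mul_exp {ι : Type*} [Fintype ι] (c r : ι → ℝ) {t : ℝ}
    (ht : ∑ i, c i * exp (t * r i) ≠ 0) :
    HasDerivAt (fun t => log (∑ i, c i * exp (t * r i)))
      ((∑ i, c i * (exp (t * r i) * r i)) / ∑ i, c i * exp (t * r i)) t := by
  have hsum : HasDerivAt (fun t => ∑ i, c i * exp (t * r i))
      (∑ i, c i * (exp (t * r i) * r i)) t :=
    HasDerivAt.fun_sum fun i _ =>
      (((hasDerivAt_id t).mul_const (r i)).exp.const_mul (c i)).congr_deriv (by simp)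
  exact hsum.log ht

theorem rpow_one_sub_mul_rpow_eq_mul_exp {b q : ℝ} (hb : 0 < b) (hq : 0 < q) (t : ℝ) :
    b ^ (1 - t) * q ^ t = b * exp (t * log (q / b)) := by
  rw [rpow_def_of_pos hb, rpow_def_of_pos hq, log_div hq.ne' hb.ne', ← exp_add,
    ← exp_log hb, ← exp_add, log_exp]
  ring_nf

theorem ConcaveOn.le_add_mul_sub_of_hasDerivAt {S : Set ℝ} {f : ℝ → ℝ} {x y f' : ℝ}
    (hf : ConcaveOn ℝ S f) (hx : x ∈ S) (hy : y ∈ S) (hxy : x ≤ y) (hf' : HasDerivAt f f' y) :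
    f x ≤ f y + f' * (x - y) := by
  rcases hxy.eq_or_lt with rfl | hlt
  · simp
  have hslope := hf.le_slope_of_hasDerivAt hx hy hlt hf'
  rw [slope_def_field, le_div_iff₀ (sub_pos.mpr hlt)] at hslope
  linarith

section Channel

variable {𝒳 𝒴 : Type*} [Fintype 𝒳] [Fintype 𝒴] (P : 𝒳 → ℝ) (Qstar : 𝒴 → ℝ) (Q : 𝒳 → 𝒴 → ℝ)

theorem sum_mul_log_div_eq_mutualInfo_add_divergence (hQ : ∀ x y, Q x y ≠ 0)
    (hQstar : ∀ y, Qstar y ≠ 0) (hPQ : ∀ y, ∑ x, P x * Q x y ≠ 0) :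
    ∑ x, ∑ y, P x * Q x y * log (Q x y / Qstar y) =
      ∑ x, ∑ y, P x * Q x y * log (Q x y / ∑ x', P x' * Q x' y) +
        ∑ y, (∑ x, P x * Q x y) * log ((∑ x, P x * Q x y) / Qstar y) := by
  have hsplit : ∀ x y, log (Q x y / Qstar y) =
      log (Q x y / ∑ x', P x' * Q x' y) + log ((∑ x', P x' * Q x' y) / Qstar y) := fun x y => by
    rw [← log_mul (div_ne_zero (hQ x y) (hPQ y)) (div_ne_zero (hPQ y) (hQstar y)),
      div_mul_div_cancel₀ (hPQ y)]
  simp only [hsplit, mul_add, sum_add_distrib, sum_mul]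
  rw [sum_comm (f := fun x y => P x * Q x y * log ((∑ x', P x' * Q x' y) / Qstar y))]

variable {P Qstar Q}

theorem sum_mul_rpow_one_sub_mul_rpow_eq_sum_mul_exp (hQstar : ∀ y, 0 < Qstar y)
    (hQ : ∀ x y, 0 < Q x y) (t : ℝ) :
    ∑ x, ∑ y, P x * Qstar y ^ (1 - t) * Q x y ^ t =
      ∑ p : 𝒳 × 𝒴, P p.1 * Qstar p.2 * exp (t * log (Q p.1 p.2 / Qstar p.2)) := by
  simp only [Fintype.sum_prod_type, mul_assoc,
    rpow_one_sub_mul_rpow_eq_mul_exp (hQstar _) (hQ _ _)]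

theorem concaveOn_neg_log_sum_mul_rpow_one_sub_mul_rpow [Nonempty 𝒳] [Nonempty 𝒴]
    (hP : ∀ x, 0 < P x) (hQstar : ∀ y, 0 < Qstar y) (hQ : ∀ x y, 0 < Q x y) :
    ConcaveOn ℝ Set.univ fun t : ℝ => -log (∑ x, ∑ y, P x * Qstar y ^ (1 - t) * Q x y ^ t) := by
  simp only [sum_mul_rpow_one_sub_mul_rpow_eq_sum_mul_exp hQstar hQ]
  exact (convexOn_log_sum_mul_exp (fun p : 𝒳 × 𝒴 => P p.1 * Qstar p.2)
    (fun p => log (Q p.1 p.2 / Qstar p.2)) fun p => mul_pos (hP p.1) (hQstar p.2)).neg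

theorem hasDerivAt_log_sum_mul_rpow_one_sub_mul_rpow_one (hPs : ∑ x, P x = 1)
    (hQstar : ∀ y, 0 < Qstar y) (hQ : ∀ x y, 0 < Q x y) (hQs : ∀ x, ∑ y, Q x y = 1) :
    HasDerivAt (fun t : ℝ => log (∑ x, ∑ y, P x * Qstar y ^ (1 - t) * Q x y ^ t))
      (∑ x, ∑ y, P x * Q x y * log (Q x y / Qstar y)) 1 := by
  have hexp : ∀ p : 𝒳 × 𝒴, P p.1 * Qstar p.2 * exp (1 * log (Q p.1 p.2 / Qstar p.2)) =
      P p.1 * Q p.1 p.2 := fun p => by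
    rw [one_mul, exp_log (div_pos (hQ p.1 p.2) (hQstar p.2)), mul_assoc,
      mul_div_cancel₀ _ (hQstar p.2).ne']
  have hmass : ∑ p : 𝒳 × 𝒴, P p.1 * Qstar p.2 * exp (1 * log (Q p.1 p.2 / Qstar p.2)) = 1 := by
    simp only [hexp, Fintype.sum_prod_type, ← mul_sum, hQs, mul_one, hPs]
  have h := hasDerivAt_log_sum_mul_exp (fun p : 𝒳 × 𝒴 => P p.1 * Qstar p.2)
    (fun p => log (Q p.1 p.2 / Qstar p.2)) (t := 1) (by rw [hmass]; exact one_ne_zero)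
  rw [hmass, div_one] at h
  simp only [← mul_assoc, hexp] at h
  simp only [sum_mul_rpow_one_sub_mul_rpow_eq_sum_mul_exp hQstar hQ]
  convert h using 1
  rw [Fintype.sum_prod_type]

end Channel

/-- `μ₀(t) = -log Σ_{x,y} P(x) Q⋆(y)^{1-t} Q(y|x)^t` is concave on `[0,1]`, `μ₀(1) = 0`,
its derivative at `t = 1` is `-I(P,Q) - D([PQ]‖Q⋆)`, and consequently
`sup_{t∈[0,1]} μ₀(t) ≤ I(P,Q) + D([PQ]‖Q⋆)`. -/
theorem stmt_11 {𝒳 𝒴 : Type*} [Fintype 𝒳] [Fintype 𝒴]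
    (P : 𝒳 → ℝ) (Qstar : 𝒴 → ℝ) (Q : 𝒳 → 𝒴 → ℝ)
    (hP : ∀ x, 0 < P x) (hPs : ∑ x, P x = 1)
    (hQstar : ∀ y, 0 < Qstar y) (hQstars : ∑ y, Qstar y = 1)
    (hQ : ∀ x y, 0 < Q x y) (hQs : ∀ x, ∑ y, Q x y = 1) :
    let μ₀ : ℝ → ℝ := fun t => -Real.log (∑ x, ∑ y, P x * Qstar y ^ (1 - t) * Q x y ^ t)
    let PQ : 𝒴 → ℝ := fun y => ∑ x, P x * Q x y
    let I : ℝ := ∑ x, ∑ y, P x * Q x y * Real.log (Q x y / PQ y)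
    let Dv : ℝ := ∑ y, PQ y * Real.log (PQ y / Qstar y)
    ConcaveOn ℝ (Set.Icc (0:ℝ) 1) μ₀ ∧
    μ₀ 1 = 0 ∧
    HasDerivAt μ₀ (-I - Dv) 1 ∧
    (∀ t ∈ Set.Icc (0:ℝ) 1, μ₀ t ≤ I + Dv) := by
  intro μ₀ PQ I Dv
  have : Nonempty 𝒳 :=
    univ_nonempty_iff.mp (nonempty_of_sum_ne_zero (by rw [hPs]; exact one_ne_zero))
  have : Nonempty 𝒴 :=
    univ_nonempty_iff.mp (nonempty_of_sum_ne_zero (by rw [hQstars]; exact one_ne_zero))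
  have hconc : ConcaveOn ℝ (Set.Icc 0 1) μ₀ :=
    (concaveOn_neg_log_sum_mul_rpow_one_sub_mul_rpow hP hQstar hQ).subset (Set.subset_univ _)
      (convex_Icc 0 1)
  have hμ0 : μ₀ 0 = 0 := by simp [μ₀, ← mul_sum, hQstars, hPs]
  have hμ1 : μ₀ 1 = 0 := by simp [μ₀, ← mul_sum, hQs, hPs]
  have hderiv : HasDerivAt μ₀ (-(I + Dv)) 1 := by
    rw [← sum_mul_log_div_eq_mutualInfo_add_divergence P Qstar Q (fun x y => (hQ x y).ne')
      (fun y => (hQstar y).ne') fun y => (sum_pos (fun x _ => mul_pos (hP x) (hQ x y))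
        univ_nonempty).ne']
    exact (hasDerivAt_log_sum_mul_rpow_one_sub_mul_rpow_one hPs hQstar hQ hQs).neg
  refine ⟨hconc, hμ1, by rwa [neg_add'] at hderiv, fun t ht => ?_⟩
  have htangent : ∀ t ∈ Set.Icc (0:ℝ) 1, μ₀ t ≤ (I + Dv) * (1 - t) := fun t ht => by
    have := hconc.le_add_mul_sub_of_hasDerivAt ht (by simp) ht.2 hderiv
    linarith
  have hnonneg : 0 ≤ I + Dv := by simpa [hμ0] using htangent 0 (by simp)
  exact (htangent t ht).trans (mul_le_of_le_one_right hnonneg (by linarith [ht.1]))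
end
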